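/- arXiv:2301.00543 — 3 statements merged into one kernel-verified Lean document; each statement's English description precedes it below -/
import Mathlib

section
/- Let A = diag(1, ζₙᵃ, ζₙᵇ) with n ≥ 3, 0 ≤ a < b ≤ n−1, gcd(a,b)=1, generating a cyclic subgroup G of PGL₃(ℂ) of order n. Then G is conjugate in PGL₃(ℂ) to a subgroup of PGL₃(ℝ) if and only if a+b ≡ 0 (mod n), or a−2b ≡ 0 (mod n), or 2a−b ≡ 0 (mod n). -/
/-!
Write `e k = exp (2πik/n)` for `k : ZMod n`, so that `A = diag (e 0, e a, e b)`. Complex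
conjugation `σ` fixes `PGL₃(ℝ)` pointwise, so if some conjugate of `[A]` is real, then `[A]` is
conjugate to `σ [A]` in `PGL₃(ℂ)`. Lifted to `GL₃(ℂ)`, `diag (e 0, e (-a), e (-b))` is similar to
`c • A` for a scalar `c`; comparing characteristic roots gives `c = e t` and
`{0, -a, -b} = {t, a + t, b + t}` as multisets in `ZMod n`. For `t = 0` this forces `a + b = 0`
(the alternative `2a = 2b = 0` gives `2 = 0` by Bézout), while `t = -a` and `t = -b` give
`a = 2b` and `b = 2a` on comparing sums.

Conversely, in each of the three cases a scalar multiple of `A`, with permuted coordinates, is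
`diag (1, u, conj u)`, and this is similar to a real matrix with a rotation block.
-/

open Matrix

noncomputable section

abbrev PGL3C := GL (Fin 3) ℂ ⧸ Subgroup.center (GL (Fin 3) ℂ)

def proj : GL (Fin 3) ℂ →* PGL3C := QuotientGroup.mk' _

def sigmaGL : GL (Fin 3) ℂ ≃* GL (Fin 3) ℂ :=
  Units.mapEquiv (Complex.conjAe.toRingEquiv.mapMatrix.toMulEquiv)

lemma sigma_center :
    (Subgroup.center (GL (Fin 3) ℂ)).map sigmaGL.toMonoidHom
      = Subgroup.center (GL (Fin 3) ℂ) := by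
  ext x
  simp only [Subgroup.mem_map, Subgroup.mem_center_iff]
  constructor
  · rintro ⟨y, hy, rfl⟩ g
    have := hy (sigmaGL.symm g)
    calc g * sigmaGL y = sigmaGL (sigmaGL.symm g * y) := by
          simp [_root_.map_mul]
      _ = sigmaGL (y * sigmaGL.symm g) := by rw [this]
      _ = sigmaGL y * g := by simp [_root_.map_mul]
  · intro hx
    refine ⟨sigmaGL.symm x, fun g => ?_, by simp⟩
    have := hx (sigmaGL g)
    calc g * sigmaGL.symm x = sigmaGL.symm (sigmaGL g * x) := by simp [_root_.map_mul]
      _ = sigmaGL.symm (x * sigmaGL g) := by rw [this]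
      _ = sigmaGL.symm x * g := by simp [_root_.map_mul]

def sigmaPGL : PGL3C ≃* PGL3C :=
  QuotientGroup.congr _ _ sigmaGL sigma_center

def PGL3R : Subgroup PGL3C :=
  ((Units.map ((algebraMap ℝ ℂ).mapMatrix.toMonoidHom :
      Matrix (Fin 3) (Fin 3) ℝ →* Matrix (Fin 3) (Fin 3) ℂ)).range).map proj

theorem add_eq_zero_or_of_neg_eq_shift {R : Type*} [CommRing R] {a b t : R} (hab : IsCoprime a b)
    (h2 : (2 : R) ≠ 0) (h : ({0, -a, -b} : Multiset R) = {t, a + t, b + t}) :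
    a + b = 0 ∨ a - 2 * b = 0 ∨ 2 * a - b = 0 := by
  have hsum := congrArg Multiset.sum h
  simp only [Multiset.insert_eq_cons, Multiset.sum_cons, Multiset.sum_singleton] at hsum
  have ht : t ∈ ({0, -a, -b} : Multiset R) := h ▸ Multiset.mem_cons_self _ _
  have ha : a + t ∈ ({0, -a, -b} : Multiset R) := h ▸ by simp
  simp only [Multiset.insert_eq_cons, Multiset.mem_cons, Multiset.mem_singleton] at ht ha
  rcases ht with rfl | rfl | rfl
  · obtain ⟨u, v, huv⟩ := hab
    rcases ha with ha | ha | ha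
    · exact absurd (by linear_combination -2 * huv + 2 * u * ha - v * (hsum + 2 * ha)) h2
    · exact absurd (by linear_combination -2 * huv + u * ha - v * (hsum + ha)) h2
    · left; linear_combination ha
  · right; left; linear_combination hsum
  · right; right; linear_combination -hsum

open Complex ComplexConjugate

namespace Matrix

theorem permMatrix_mul_diagonal {n R : Type*} [Fintype n] [DecidableEq n] [NonAssocSemiring R]
    (π : Equiv.Perm n) (d : n → R) :
    π.permMatrix R * diagonal d = diagonal (d ∘ π) * π.permMatrix R := by
  ext i j
  by_cases h : π i = j
  · subst h; simp [PEquiv.toMatrix_apply]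
  · simp [PEquiv.toMatrix_apply, h]

open Polynomial in
theorem univ_val_map_eq_of_conj_diagonal {n R : Type*} [Fintype n] [DecidableEq n] [CommRing R]
    [IsDomain R] (P : GL n R) {d d' : n → R}
    (h : (P : Matrix n n R) * diagonal d * (P⁻¹ : GL n R) = diagonal d') :
    Finset.univ.val.map d = Finset.univ.val.map d' := by
  have := congrArg (fun M : Matrix n n R => M.charpoly.roots) h
  simp only [coe_units_inv, charpoly_units_conj, charpoly_diagonal] at this
  rw [roots_prod _ _ (Finset.prod_ne_zero_iff.mpr fun i _ => X_sub_C_ne_zero _),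
    roots_prod _ _ (Finset.prod_ne_zero_iff.mpr fun i _ => X_sub_C_ne_zero _)] at this
  simpa only [roots_X_sub_C, Multiset.bind_singleton] using this

end Matrix

theorem proj_eq_proj_iff {x y : GL (Fin 3) ℂ} :
    proj x = proj y ↔ ∃ c : ℂˣ, y = x * GeneralLinearGroup.scalar (Fin 3) c := by
  simp only [proj, QuotientGroup.mk'_apply, QuotientGroup.eq,
    GeneralLinearGroup.center_eq_range_scalar, MonoidHom.mem_range, eq_inv_mul_iff_mul_eq,
    eq_comm (a := y)]

theorem proj_mem_PGL3R_of_eq_map (B : GL (Fin 3) ℂ) (M : Matrix (Fin 3) (Fin 3) ℝ)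
    (h : (B : Matrix (Fin 3) (Fin 3) ℂ) = M.map (algebraMap ℝ ℂ)) : proj B ∈ PGL3R := by
  have hM : IsUnit M := by
    rw [isUnit_iff_isUnit_det, isUnit_iff_ne_zero]
    intro h0
    have := (isUnit_iff_isUnit_det _).mp B.isUnit
    rw [h, ← RingHom.mapMatrix_apply, ← RingHom.map_det, h0, map_zero] at this
    exact not_isUnit_zero this
  obtain ⟨M, rfl⟩ := hM
  exact ⟨_, ⟨M, rfl⟩, congrArg proj (Units.ext h.symm)⟩

theorem conj_proj_mem_PGL3R_of_mul_eq {P A : GL (Fin 3) ℂ} (M : Matrix (Fin 3) (Fin 3) ℝ)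
    (h : (P : Matrix (Fin 3) (Fin 3) ℂ) * A = M.map (algebraMap ℝ ℂ) * P) :
    MulAut.conj (proj P) (proj A) ∈ PGL3R := by
  rw [MulAut.conj_apply, ← map_inv, ← map_mul, ← map_mul]
  refine proj_mem_PGL3R_of_eq_map _ M ?_
  rw [Units.val_mul, Units.val_mul, h, Matrix.mul_assoc, ← Units.val_mul, mul_inv_cancel,
    Units.val_one, Matrix.mul_one]

theorem sigmaPGL_eq_self_of_mem_PGL3R {x : PGL3C} (hx : x ∈ PGL3R) : sigmaPGL x = x := by
  obtain ⟨_, ⟨M, rfl⟩, rfl⟩ := hx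
  refine congrArg proj (Units.ext ?_)
  ext i j
  simp [sigmaGL]

theorem isConj_sigmaPGL_of_conj_mem_PGL3R {φ g : PGL3C} (h : MulAut.conj φ g ∈ PGL3R) :
    IsConj g (sigmaPGL g) := by
  have hfix := sigmaPGL_eq_self_of_mem_PGL3R h
  simp only [MulAut.conj_apply, map_mul, map_inv] at hfix
  refine isConj_iff.mpr ⟨(sigmaPGL φ)⁻¹ * φ, ?_⟩
  calc (sigmaPGL φ)⁻¹ * φ * g * ((sigmaPGL φ)⁻¹ * φ)⁻¹
      = (sigmaPGL φ)⁻¹ * (φ * g * φ⁻¹) * sigmaPGL φ := by group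
    _ = sigmaPGL g := by rw [← hfix]; group

theorem exists_mul_diagonal_conj_pair_eq_real (u : ℂ) :
    ∃ (P : GL (Fin 3) ℂ) (M : Matrix (Fin 3) (Fin 3) ℝ),
      (P : Matrix (Fin 3) (Fin 3) ℂ) * diagonal ![1, u, conj u] = M.map (algebraMap ℝ ℂ) * P := by
  refine ⟨GeneralLinearGroup.mkOfDetNeZero !![1, 0, 0; 0, 1, 1; 0, -I, I] ?_,
    !![1, 0, 0; 0, u.re, -u.im; 0, u.im, u.re], ?_⟩
  · simp [det_fin_three]
  · ext i j
    fin_cases i <;> fin_cases j <;> simp [mul_apply, Fin.sum_univ_three] <;>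
      apply Complex.ext <;> simp

theorem exists_conj_mem_PGL3R_of_diagonal {A : GL (Fin 3) ℂ} {d : Fin 3 → ℂ}
    (hA : (A : Matrix (Fin 3) (Fin 3) ℂ) = diagonal d) (c : ℂˣ) (π : Equiv.Perm (Fin 3)) (u : ℂ)
    (h : (fun i => d (π i) * c) = ![1, u, conj u]) :
    ∃ φ : PGL3C, MulAut.conj φ (proj A) ∈ PGL3R := by
  obtain ⟨P, M, hPM⟩ := exists_mul_diagonal_conj_pair_eq_real u
  let Q : GL (Fin 3) ℂ := ⟨π.permMatrix ℂ, π⁻¹.permMatrix ℂ,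
    by rw [← permMatrix_mul, inv_mul_cancel, permMatrix_one],
    by rw [← permMatrix_mul, mul_inv_cancel, permMatrix_one]⟩
  have hscalar : proj A = proj (A * GeneralLinearGroup.scalar (Fin 3) c) :=
    proj_eq_proj_iff.mpr ⟨c, rfl⟩
  refine ⟨proj (P * Q), hscalar ▸ conj_proj_mem_PGL3R_of_mul_eq M ?_⟩
  calc ((P * Q : GL (Fin 3) ℂ) : Matrix (Fin 3) (Fin 3) ℂ)
        * (A * GeneralLinearGroup.scalar (Fin 3) c : GL (Fin 3) ℂ)
      = P * (π.permMatrix ℂ * diagonal fun i => d i * c) := by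
        simp [hA, scalar_apply, diagonal_mul_diagonal, Matrix.mul_assoc, Q]
    _ = P * diagonal ![1, u, conj u] * π.permMatrix ℂ := by
        rw [permMatrix_mul_diagonal, ← h, Matrix.mul_assoc]; rfl
    _ = M.map (algebraMap ℝ ℂ) * (P * Q : GL (Fin 3) ℂ) := by
        rw [hPM, Matrix.mul_assoc]; rfl

section RootsOfUnity

variable {n : ℕ} [NeZero n]

theorem stdAddChar_natCast (j : ℕ) :
    ZMod.stdAddChar (j : ZMod n) = exp (2 * Real.pi * I / n) ^ j := by
  rw [← Int.cast_natCast, ZMod.stdAddChar_coe, ← Complex.exp_nat_mul]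
  congr 1
  push_cast
  ring

theorem conj_stdAddChar (k : ZMod n) : conj (ZMod.stdAddChar k) = ZMod.stdAddChar (-k) := by
  rw [AddChar.starComp_apply (by rw [ZMod.ringChar_zmod_n]; exact NeZero.pos n),
    AddChar.inv_apply]

theorem exists_shift_of_isConj_proj_diagonal {x y : GL (Fin 3) ℂ} {f f' : Fin 3 → ZMod n}
    (hx : (x : Matrix (Fin 3) (Fin 3) ℂ) = diagonal fun i => ZMod.stdAddChar (f i))
    (hy : (y : Matrix (Fin 3) (Fin 3) ℂ) = diagonal fun i => ZMod.stdAddChar (f' i))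
    (h : IsConj (proj x) (proj y)) :
    ∃ t, Finset.univ.val.map f' = Finset.univ.val.map fun i => f i + t := by
  obtain ⟨ψ, hψ⟩ := isConj_iff.mp h
  obtain ⟨P, rfl⟩ : ∃ P, proj P = ψ := QuotientGroup.mk'_surjective _ ψ
  obtain ⟨c, hc⟩ := (proj_eq_proj_iff (x := P * x * P⁻¹) (y := y)).mp
    (by rwa [map_mul, map_mul, map_inv])
  have hconj : (P : Matrix (Fin 3) (Fin 3) ℂ) * diagonal (fun i => ZMod.stdAddChar (f i) * c)
      * (P⁻¹ : GL (Fin 3) ℂ) = diagonal fun i => ZMod.stdAddChar (f' i) := by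
    rw [← hy, hc, mul_assoc _ P⁻¹, ← GeneralLinearGroup.scalar_commute, ← mul_assoc,
      mul_assoc P, Units.val_mul, Units.val_mul, Units.val_mul, hx, GeneralLinearGroup.coe_scalar,
      scalar_apply, diagonal_mul_diagonal]
  have hmap := Matrix.univ_val_map_eq_of_conj_diagonal P hconj
  obtain ⟨j, -, hj⟩ := Multiset.mem_map.mp
    (hmap ▸ Multiset.mem_map_of_mem _ (Finset.mem_univ_val 0))
  refine ⟨f' j - f 0, Multiset.map_injective ZMod.injective_stdAddChar ?_⟩
  have hc : (c : ℂ) = ZMod.stdAddChar (f' j - f 0) := by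
    rw [AddChar.map_sub_eq_div, hj, mul_div_cancel_left₀ _ (AddChar.val_isUnit _ _).ne_zero]
  simpa only [Multiset.map_map, Function.comp_def, AddChar.map_add_eq_mul, ← hc] using hmap.symm

theorem exists_conj_mem_PGL3R_of_perm_exponents {A : GL (Fin 3) ℂ} {f : Fin 3 → ZMod n}
    (hA : (A : Matrix (Fin 3) (Fin 3) ℂ) = diagonal fun i => ZMod.stdAddChar (f i))
    (π : Equiv.Perm (Fin 3)) (m k : ZMod n) (h : (fun i => f (π i) - m) = ![0, k, -k]) :
    ∃ φ : PGL3C, MulAut.conj φ (proj A) ∈ PGL3R := by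
  refine exists_conj_mem_PGL3R_of_diagonal hA
    (AddChar.val_isUnit (ZMod.stdAddChar (N := n)) (-m)).unit π (ZMod.stdAddChar k) ?_
  funext i
  rw [IsUnit.unit_spec, ← AddChar.map_add_eq_mul, ← sub_eq_add_neg, congrFun h i]
  fin_cases i <;> simp [conj_stdAddChar]

theorem exists_conj_mem_PGL3R_of_add_eq_zero_or {a b : ZMod n} {A : GL (Fin 3) ℂ}
    (hA : (A : Matrix (Fin 3) (Fin 3) ℂ) = diagonal fun i => ZMod.stdAddChar (![0, a, b] i))
    (h : a + b = 0 ∨ a - 2 * b = 0 ∨ 2 * a - b = 0) :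
    ∃ φ : PGL3C, MulAut.conj φ (proj A) ∈ PGL3R := by
  rcases h with h | h | h
  · refine exists_conj_mem_PGL3R_of_perm_exponents hA 1 0 a ?_
    funext i; fin_cases i <;> simp; linear_combination h
  · refine exists_conj_mem_PGL3R_of_perm_exponents hA (Equiv.swap 0 2) b b ?_
    funext i; fin_cases i <;> simp [Equiv.swap_apply_of_ne_of_ne]; linear_combination h
  · refine exists_conj_mem_PGL3R_of_perm_exponents hA (Equiv.swap 0 1) a (-a) ?_
    funext i; fin_cases i <;> simp [Equiv.swap_apply_of_ne_of_ne]; linear_combination -h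

theorem add_eq_zero_or_of_exists_conj_mem_PGL3R (h2 : (2 : ZMod n) ≠ 0) {a b : ZMod n}
    (hab : IsCoprime a b) {A : GL (Fin 3) ℂ}
    (hA : (A : Matrix (Fin 3) (Fin 3) ℂ) = diagonal fun i => ZMod.stdAddChar (![0, a, b] i))
    (h : ∃ φ : PGL3C, MulAut.conj φ (proj A) ∈ PGL3R) :
    a + b = 0 ∨ a - 2 * b = 0 ∨ 2 * a - b = 0 := by
  obtain ⟨φ, hφ⟩ := h
  have hσA : ((sigmaGL A : GL (Fin 3) ℂ) : Matrix (Fin 3) (Fin 3) ℂ)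
      = diagonal fun i => ZMod.stdAddChar (![0, -a, -b] i) := by
    have hσ : ((sigmaGL A : GL (Fin 3) ℂ) : Matrix (Fin 3) (Fin 3) ℂ)
        = (A : Matrix (Fin 3) (Fin 3) ℂ).map conj := rfl
    rw [hσ, hA, diagonal_map (map_zero _)]
    congr 1
    funext i
    fin_cases i <;> simp [conj_stdAddChar]
  obtain ⟨t, ht⟩ := exists_shift_of_isConj_proj_diagonal hA hσA
    (isConj_sigmaPGL_of_conj_mem_PGL3R hφ)
  refine add_eq_zero_or_of_neg_eq_shift hab h2 (t := t) ?_
  simp only [Fin.univ_val_map, List.ofFn_succ, List.ofFn_zero, Fin.succ_zero_eq_one,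
    Fin.succ_one_eq_two, cons_val_zero, cons_val_one, cons_val_two, tail_cons, head_cons,
    zero_add] at ht
  exact ht

end RootsOfUnity

theorem stmt4_general (n a b : ℕ) (hn : 3 ≤ n)
    (hgcd : Nat.gcd a b = 1)
    (A : GL (Fin 3) ℂ)
    (hA : (A : Matrix (Fin 3) (Fin 3) ℂ)
      = Matrix.diagonal ![1, (Complex.exp (2 * Real.pi * Complex.I / (n : ℂ))) ^ a, (Complex.exp (2 * Real.pi * Complex.I / (n : ℂ))) ^ b]) :
    (∃ φ : PGL3C,
        Subgroup.map (MulAut.conj φ).toMonoidHom (Subgroup.closure {proj A}) ≤ PGL3R)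
      ↔ ((n : ℤ) ∣ ((a : ℤ) + b) ∨ (n : ℤ) ∣ ((a : ℤ) - 2 * b) ∨ (n : ℤ) ∣ (2 * (a : ℤ) - b)) := by
  have : NeZero n := ⟨by omega⟩
  have hA' : (A : Matrix (Fin 3) (Fin 3) ℂ)
      = diagonal fun i => ZMod.stdAddChar (![0, (a : ZMod n), b] i) := by
    rw [hA]
    congr 1
    funext i
    fin_cases i <;> simp [stdAddChar_natCast]
  have h2 : (2 : ZMod n) ≠ 0 := by
    rw [← Nat.cast_ofNat, Ne, ZMod.natCast_eq_zero_iff]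
    exact fun h => absurd (Nat.le_of_dvd two_pos h) (by omega)
  have hab : IsCoprime (a : ZMod n) b := by
    simpa using (Nat.isCoprime_iff_coprime.mpr hgcd).map (Int.castRingHom (ZMod n))
  simp only [MonoidHom.map_closure, Set.image_singleton, Subgroup.closure_le,
    Set.singleton_subset_iff, MulEquiv.coe_toMonoidHom, ← ZMod.intCast_zmod_eq_zero_iff_dvd]
  push_cast
  exact ⟨add_eq_zero_or_of_exists_conj_mem_PGL3R h2 hab hA',
    exists_conj_mem_PGL3R_of_add_eq_zero_or hA'⟩

theorem stmt4 (n a b : ℕ) (hn : 3 ≤ n) (hab : a < b) (hb : b ≤ n - 1)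
    (hgcd : Nat.gcd a b = 1)
    (A : GL (Fin 3) ℂ)
    (hA : (A : Matrix (Fin 3) (Fin 3) ℂ)
      = Matrix.diagonal ![1, (Complex.exp (2 * Real.pi * Complex.I / (n : ℂ))) ^ a, (Complex.exp (2 * Real.pi * Complex.I / (n : ℂ))) ^ b]) :
    (∃ φ : PGL3C,
        Subgroup.map (MulAut.conj φ).toMonoidHom (Subgroup.closure {proj A}) ≤ PGL3R)
      ↔ ((n : ℤ) ∣ ((a : ℤ) + b) ∨ (n : ℤ) ∣ ((a : ℤ) - 2 * b) ∨ (n : ℤ) ∣ (2 * (a : ℤ) - b)) :=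
  stmt4_general n a b hn hgcd A hA
end
end

section
/- For every n ≥ 3, the cyclic subgroup of PGL₃(ℂ) generated by the homology diag(1, 1, ζₙ) is not conjugate in PGL₃(ℂ) to any subgroup of PGL₃(ℝ). -/
open Matrix

noncomputable section

/-! ### Auxiliary lemmas -/

lemma sigmaGL_coe (g : GL (Fin 3) ℂ) :
    (sigmaGL g : Matrix (Fin 3) (Fin 3) ℂ)
      = (g : Matrix (Fin 3) (Fin 3) ℂ).map (starRingEnd ℂ) := rfl

lemma sigmaPGL_proj (g : GL (Fin 3) ℂ) : sigmaPGL (proj g) = proj (sigmaGL g) := rfl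

lemma center_scalar (z : GL (Fin 3) ℂ) (hz : z ∈ Subgroup.center (GL (Fin 3) ℂ)) :
    ∃ c : ℂ, (z : Matrix (Fin 3) (Fin 3) ℂ) = c • (1 : Matrix (Fin 3) (Fin 3) ℂ) := by
  rw [Subgroup.mem_center_iff] at hz
  have h : (z : Matrix (Fin 3) (Fin 3) ℂ) ∈ Set.range (Matrix.scalar (Fin 3)) := by
    apply Matrix.mem_range_scalar_of_commute_transvectionStruct
    intro t
    have := congrArg Units.val (hz ⟨t.toMatrix, t.inv.toMatrix, t.mul_inv, t.inv_mul⟩)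
    simpa [Commute, SemiconjBy] using this
  obtain ⟨c, hc⟩ := h
  exact ⟨c, by rw [← hc, Matrix.scalar_apply, Matrix.smul_one_eq_diagonal]⟩

lemma sigma_fix (x : PGL3C) (hx : x ∈ PGL3R) : sigmaPGL x = x := by
  obtain ⟨u, hu, rfl⟩ := hx
  obtain ⟨B, rfl⟩ := hu
  rw [sigmaPGL_proj]
  congr 1
  ext i j
  show ((Units.map _ B : GL (Fin 3) ℂ) : Matrix (Fin 3) (Fin 3) ℂ).map (starRingEnd ℂ) i j = _
  simp [Units.coe_map, Complex.conj_ofReal]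

lemma exp_ne_one (n : ℕ) (hn : 3 ≤ n) (m : ℕ) (hm : 0 < m) (hmn : m < n) :
    Complex.exp ((m : ℂ) * (2 * Real.pi * Complex.I / (n : ℂ))) ≠ 1 := by
  intro h
  rw [Complex.exp_eq_one_iff] at h
  obtain ⟨k, hk⟩ := h
  have hn0 : (n : ℂ) ≠ 0 := by
    simp only [ne_eq, Nat.cast_eq_zero]; omega
  have h2 : (2 * (Real.pi : ℂ) * Complex.I) ≠ 0 := Complex.two_pi_I_ne_zero
  have : (m : ℂ) = k * n := by
    field_simp at hk
    have hk' : (m : ℂ) * (2 * (Real.pi:ℂ) * Complex.I)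
        = (k:ℂ) * (n:ℂ) * (2 * (Real.pi:ℂ) * Complex.I) := by
      rw [hk]; ring
    exact mul_right_cancel₀ h2 hk'
  have hZ : (m : ℤ) = k * n := by exact_mod_cast this
  have hdvd : (n : ℤ) ∣ m := ⟨k, by linarith [hZ]⟩
  have := Int.le_of_dvd (by exact_mod_cast hm) hdvd
  omega

theorem stmt5 (n : ℕ) (hn : 3 ≤ n) (A : GL (Fin 3) ℂ)
    (hA : (A : Matrix (Fin 3) (Fin 3) ℂ) = Matrix.diagonal ![1, 1, Complex.exp (2 * Real.pi * Complex.I / (n : ℂ))]) :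
    ¬∃ φ : PGL3C,
      Subgroup.map (MulAut.conj φ).toMonoidHom (Subgroup.closure {proj A}) ≤ PGL3R := by
  rintro ⟨φ, hle⟩
  set ζ : ℂ := Complex.exp (2 * Real.pi * Complex.I / (n : ℂ)) with hζdef
  -- basic facts about ζ
  have hζ0 : ζ ≠ 0 := Complex.exp_ne_zero _
  have hζ1 : ζ ≠ 1 := by
    have h := exp_ne_one n hn 1 one_pos (by omega)
    simpa using h
  have hζ2 : ζ * ζ ≠ 1 := by
    have h := exp_ne_one n hn 2 two_pos (by omega)
    intro hcon
    apply h
    rw [show ((2:ℕ) : ℂ) * (2 * Real.pi * Complex.I / (n : ℂ))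
        = (2 * Real.pi * Complex.I / (n : ℂ)) + (2 * Real.pi * Complex.I / (n : ℂ)) by push_cast; ring,
      Complex.exp_add, ← hζdef]
    exact hcon
  have hζc : ζ * (starRingEnd ℂ) ζ = 1 := by
    rw [hζdef, ← Complex.exp_conj, ← Complex.exp_add]
    rw [show (starRingEnd ℂ) (2 * (Real.pi:ℂ) * Complex.I / (n:ℂ))
        = -(2 * (Real.pi:ℂ) * Complex.I / (n:ℂ)) by
      simp [map_div₀, Complex.conj_I, Complex.conj_ofReal, map_ofNat]; ring]
    rw [add_neg_cancel, Complex.exp_zero]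
  -- the conjugated generator lies in PGL3R, hence is fixed by sigmaPGL
  have hx : (MulAut.conj φ).toMonoidHom (proj A) ∈ PGL3R :=
    hle (Subgroup.mem_map_of_mem _ (Subgroup.subset_closure rfl))
  have hfix := sigma_fix _ hx
  simp only [MulEquiv.toMonoidHom_eq_coe, MonoidHom.coe_coe, MulAut.conj_apply,
    _root_.map_mul, _root_.map_inv] at hfix
  set a := proj A with ha
  set ψ : PGL3C := (sigmaPGL φ)⁻¹ * φ with hψdef
  have h2 : sigmaPGL a = ψ * a * ψ⁻¹ := by
    calc sigmaPGL a
        = (sigmaPGL φ)⁻¹ * (sigmaPGL φ * sigmaPGL a * (sigmaPGL φ)⁻¹) * sigmaPGL φ := by group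
      _ = (sigmaPGL φ)⁻¹ * (φ * a * φ⁻¹) * sigmaPGL φ := by rw [hfix]
      _ = ψ * a * ψ⁻¹ := by rw [hψdef]; group
  obtain ⟨P, hP⟩ := QuotientGroup.mk'_surjective (Subgroup.center (GL (Fin 3) ℂ)) ψ
  have h3 : proj (sigmaGL A) = proj (P * A * P⁻¹) := by
    rw [← sigmaPGL_proj, _root_.map_mul, _root_.map_mul, _root_.map_inv]
    rw [show proj P = ψ from hP]
    exact h2
  rw [show proj = QuotientGroup.mk' (Subgroup.center (GL (Fin 3) ℂ)) from rfl,
    QuotientGroup.mk'_eq_mk'] at h3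
  obtain ⟨z, hzc, hzeq⟩ := h3
  obtain ⟨c, hc⟩ := center_scalar z hzc
  -- pass to matrices
  set Pm : Matrix (Fin 3) (Fin 3) ℂ := (P : Matrix (Fin 3) (Fin 3) ℂ) with hPm
  set Pi : Matrix (Fin 3) (Fin 3) ℂ := ((P⁻¹ : GL (Fin 3) ℂ) : Matrix (Fin 3) (Fin 3) ℂ) with hPi
  have hPP : Pm * Pi = 1 := by
    rw [hPm, hPi, ← Units.val_mul, mul_inv_cancel, Units.val_one]
  have hσA : ((sigmaGL A : GL (Fin 3) ℂ) : Matrix (Fin 3) (Fin 3) ℂ)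
      = Matrix.diagonal ![1, 1, (starRingEnd ℂ) ζ] := by
    rw [sigmaGL_coe, hA, Matrix.diagonal_map (map_zero _)]
    refine congrArg Matrix.diagonal ?_
    funext i
    fin_cases i <;> simp
  have hM : c • Matrix.diagonal ![1, 1, (starRingEnd ℂ) ζ]
      = Pm * Matrix.diagonal ![1, 1, ζ] * Pi := by
    have h := congrArg Units.val hzeq
    simp only [Units.val_mul] at h
    rw [hσA, hc, hA] at h
    rw [← h, mul_smul_comm, mul_one]
  -- determinant equation
  have hdetPP : Pm.det * Pi.det = 1 := by
    rw [← Matrix.det_mul, hPP, Matrix.det_one]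
  have hdet : c ^ 3 * (starRingEnd ℂ) ζ = ζ := by
    have dL : (c • Matrix.diagonal ![1, 1, (starRingEnd ℂ) ζ]).det
        = c * 1 * (c * 1) * (c * (starRingEnd ℂ) ζ) := by
      rw [← Matrix.diagonal_smul, Matrix.det_diagonal, Fin.prod_univ_three]
      simp
    have dD : (Matrix.diagonal ![1, 1, ζ]).det = ζ := by
      rw [Matrix.det_diagonal, Fin.prod_univ_three]
      simp
    have e1 := congrArg Matrix.det hM
    rw [Matrix.det_mul, Matrix.det_mul, dL, dD] at e1
    have e2 : Pm.det * ζ * Pi.det = ζ := by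
      calc Pm.det * ζ * Pi.det = (Pm.det * Pi.det) * ζ := by ring
        _ = ζ := by rw [hdetPP, one_mul]
    rw [e2] at e1
    linear_combination e1
  -- evaluation at 1
  have hM2 : (1 : Matrix (Fin 3) (Fin 3) ℂ) - c • Matrix.diagonal ![1, 1, (starRingEnd ℂ) ζ]
      = Pm * ((1 : Matrix (Fin 3) (Fin 3) ℂ) - Matrix.diagonal ![1, 1, ζ]) * Pi := by
    rw [hM, Matrix.mul_sub, Matrix.mul_one, Matrix.sub_mul, hPP]
  have heval : (1 - c) * (1 - c) * (1 - c * (starRingEnd ℂ) ζ) = 0 := by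
    have dL2 : ((1 : Matrix (Fin 3) (Fin 3) ℂ) - c • Matrix.diagonal ![1, 1, (starRingEnd ℂ) ζ]).det
        = (1 - c * 1) * (1 - c * 1) * (1 - c * (starRingEnd ℂ) ζ) := by
      rw [← Matrix.diagonal_smul, ← Matrix.diagonal_one, Matrix.diagonal_sub,
        Matrix.det_diagonal, Fin.prod_univ_three]
      simp
    have dD2 : ((1 : Matrix (Fin 3) (Fin 3) ℂ) - Matrix.diagonal ![1, 1, ζ]).det = 0 := by
      rw [← Matrix.diagonal_one, Matrix.diagonal_sub, Matrix.det_diagonal, Fin.prod_univ_three]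
      simp
    have e1 := congrArg Matrix.det hM2
    rw [Matrix.det_mul, Matrix.det_mul, dL2, dD2, mul_zero, zero_mul] at e1
    linear_combination e1
  -- case analysis
  rcases mul_eq_zero.mp heval with h | h
  · -- c = 1
    have hc1 : c = 1 := by
      rcases mul_eq_zero.mp h with h' | h' <;>
        · have : c = 1 := by linear_combination -h'
          exact this
    rw [hc1, one_pow, one_mul] at hdet
    apply hζ2
    rw [hdet] at hζc
    exact hζc
  · -- c * conj ζ = 1, so c = ζ
    have hcz : c * (starRingEnd ℂ) ζ = 1 := by linear_combination -h
    have hconj0 : (starRingEnd ℂ) ζ ≠ 0 := by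
      intro h0
      rw [h0, mul_zero] at hcz
      exact zero_ne_one hcz
    have hceq : c = ζ := by
      apply mul_right_cancel₀ hconj0
      rw [hcz, hζc]
    rw [hceq] at hdet
    apply hζ1
    have : ζ * ζ * (ζ * (starRingEnd ℂ) ζ) = ζ := by
      calc ζ * ζ * (ζ * (starRingEnd ℂ) ζ) = ζ ^ 3 * (starRingEnd ℂ) ζ := by ring
        _ = ζ := hdet
    rw [hζc, mul_one] at this
    have h4 : ζ * ζ = ζ * 1 := by rw [mul_one]; exact this
    exact mul_left_cancel₀ hζ0 h4
end
end

section
/- No subgroup of PGL₃(ℂ) containing a subgroup isomorphic to C₃ × C₃ is conjugate in PGL₃(ℂ) to a subgroup of PGL₃(ℝ). In particular, the Hessian groups Hess₃₆, Hess₇₂, Hess₂₁₆ and the alternating group A₆ (viewed as subgroups of PGL₃(ℂ)) are not definable over ℝ. -/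
open Matrix

noncomputable section

/-!
A copy of `C₃ × C₃` in `PGL₃(ℝ)` lifts isomorphically to `SL₃(ℝ)`: every real invertible matrix
can be rescaled to determinant `1` by a real cube root, and the only real scalar matrix of
determinant `1` is the identity. In the lift every `g ≠ 1` is a real matrix with `g³ = 1`, so
Cayley–Hamilton forces `tr g = 0`. Averaging the character over the group then gives
`dim (invariants) = 3 / 9`, which is absurd.

For the Hessian generators, `T S = ζ₃ • S T`, so their images commute in `PGL₃(ℂ)`, and no `Sⁱ Tʲ`
with `(i, j) ≠ (0, 0)` is scalar; hence they generate a copy of `C₃ × C₃`.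
-/

open Module

theorem Matrix.exists_cayleyHamilton_fin_three {R : Type*} [CommRing R]
    (M : Matrix (Fin 3) (Fin 3) R) : ∃ c : R, M ^ 3 - M.trace • M ^ 2 + c • M = M.det • 1 := by
  refine ⟨M 0 0 * M 1 1 - M 0 1 * M 1 0 + M 0 0 * M 2 2 - M 0 2 * M 2 0
    + M 1 1 * M 2 2 - M 1 2 * M 2 1, ?_⟩
  ext i j
  fin_cases i <;> fin_cases j <;>
    simp [pow_succ, Matrix.mul_apply, Matrix.trace_fin_three, Matrix.det_fin_three,
      Fin.sum_univ_three] <;> ring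

theorem Matrix.trace_eq_zero_of_pow_three_eq_one {M : Matrix (Fin 3) (Fin 3) ℝ}
    (h : M ^ 3 = 1) (hM : M ≠ 1) : M.trace = 0 := by
  have hdet : M.det = 1 := by
    have : M.det ^ 3 = 1 ^ 3 := by rw [← det_pow, h, det_one, one_pow]
    exact (Odd.pow_inj (by decide)).mp this
  obtain ⟨c, hc⟩ := M.exists_cayleyHamilton_fin_three
  rw [h, hdet, one_smul] at hc
  have h2 : M.trace • M ^ 2 = c • M := by linear_combination (norm := module) -hc
  -- multiply `h2` by `M ^ 2 = M⁻¹`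
  have hlin : M.trace • M = c • 1 :=
    calc M.trace • M = M.trace • (M ^ 2 * M ^ 2) := by
          rw [← pow_add, show 2 + 2 = 3 + 1 by rfl, pow_succ, h, one_mul]
      _ = c • 1 := by rw [← smul_mul_assoc, h2, smul_mul_assoc, ← pow_succ', h]
  by_contra ht
  have hscalar : M = (c / M.trace) • 1 := by
    rw [div_eq_inv_mul, mul_smul, ← hlin, inv_smul_smul₀ ht]
  have hr : (c / M.trace) ^ 3 = 1 ^ 3 := by
    have h00 := congr_fun₂ h 0 0
    rw [hscalar, smul_pow, one_pow] at h00
    simpa using h00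
  exact hM (by rw [hscalar, (Odd.pow_inj (by decide)).mp hr, one_smul])

theorem Representation.card_dvd_finrank_of_character_eq_zero {G k V : Type*} [Group G]
    [Finite G] [Field k] [CharZero k] [AddCommGroup V] [Module k V] [FiniteDimensional k V]
    (ρ : Representation k G V) (h : ∀ g ≠ 1, ρ.character g = 0) :
    Nat.card G ∣ finrank k V := by
  have := Fintype.ofFinite G
  have : Invertible (Nat.card G : k) := invertibleOfNonzero (by simp)
  have hsum := ρ.card_inv_mul_sum_char_eq_finrank
  rw [Finset.sum_eq_single_of_mem 1 (Finset.mem_univ _) fun g _ hg => h g hg, char_one,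
    inv_mul_eq_iff_eq_mul₀ (by simp)] at hsum
  exact ⟨_, by exact_mod_cast hsum⟩

theorem card_dvd_three_of_pow_three_of_injective {G : Type*} [Group G] [Finite G]
    (hG : ∀ g : G, g ^ 3 = 1) (ρ : G →* GL (Fin 3) ℝ) (hρ : Function.Injective ρ) :
    Nat.card G ∣ 3 := by
  let σ : Representation ℝ G (Fin 3 → ℝ) :=
    (Matrix.toLinAlgEquiv' : Matrix (Fin 3) (Fin 3) ℝ ≃ₐ[ℝ] _).toMonoidHom.comp
      ((Units.coeHom _).comp ρ)
  simpa using σ.card_dvd_finrank_of_character_eq_zero fun g hg => by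
    refine (Matrix.trace_toLin'_eq _).trans (Matrix.trace_eq_zero_of_pow_three_eq_one ?_ ?_)
    · rw [← map_pow, hG, map_one]
    · rw [MonoidHom.comp_apply, Units.coeHom_apply, Ne, Units.val_eq_one, ← map_one ρ,
        hρ.eq_iff]
      exact hg

theorem Real.exists_pow_three_eq (a : ℝ) : ∃ t : ℝ, t ^ 3 = a := by
  rcases le_total 0 a with ha | ha
  · exact ⟨a ^ ((3 : ℕ)⁻¹ : ℝ), Real.rpow_inv_natCast_pow ha (by norm_num)⟩
  · refine ⟨-(-a) ^ ((3 : ℕ)⁻¹ : ℝ), ?_⟩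
    rw [Odd.neg_pow (by decide), Real.rpow_inv_natCast_pow (by linarith) (by norm_num), neg_neg]

theorem proj_scalar (u : ℂˣ) : proj (GeneralLinearGroup.scalar (Fin 3) u) = 1 :=
  (QuotientGroup.eq_one_iff _).mpr <| by
    rw [GeneralLinearGroup.center_eq_range_scalar]
    exact ⟨u, rfl⟩

def slToPGL3C : SpecialLinearGroup (Fin 3) ℝ →* PGL3C :=
  proj.comp ((GeneralLinearGroup.map (algebraMap ℝ ℂ)).comp SpecialLinearGroup.toGL)

theorem slToPGL3C_injective : Function.Injective slToPGL3C := by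
  refine (injective_iff_map_eq_one _).mpr fun g hg => ?_
  obtain ⟨c, hc⟩ := GeneralLinearGroup.mem_center_iff_val_mem_range_scalar.mp
    ((QuotientGroup.eq_one_iff _).mp hg)
  have hentry (i j : Fin 3) : ((g i j : ℝ) : ℂ) = if i = j then c else 0 := by
    simpa [Matrix.scalar_apply, Matrix.diagonal_apply, eq_comm] using congr_fun₂ hc i j
  have hscalar : (g : Matrix (Fin 3) (Fin 3) ℝ) = Matrix.scalar (Fin 3) (g 0 0) := by
    ext i j
    apply Complex.ofReal_injective
    have hc0 : c = g 0 0 := by simpa using (hentry 0 0).symm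
    rw [hentry, Matrix.scalar_apply, Matrix.diagonal_apply]
    split_ifs <;> simp [hc0]
  generalize g 0 0 = r at hscalar
  have h1 : r ^ 3 = 1 ^ 3 := by
    rw [one_pow, ← g.det_coe, hscalar, Matrix.scalar_apply, Matrix.det_diagonal, Fin.prod_const]
  ext : 1
  rw [hscalar, (Odd.pow_inj (by decide)).mp h1, map_one]
  rfl

theorem PGL3R_le_range_slToPGL3C : PGL3R ≤ slToPGL3C.range := by
  rintro _ ⟨_, ⟨A, rfl⟩, rfl⟩
  obtain ⟨t, ht⟩ := Real.exists_pow_three_eq A.val.det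
  have ht0 : t ≠ 0 := by
    rintro rfl
    exact A.isUnit.map Matrix.detMonoidHom |>.ne_zero (by simpa using ht.symm)
  let B : SpecialLinearGroup (Fin 3) ℝ := ⟨t⁻¹ • A.val, by simp [← ht, ht0]⟩
  refine ⟨B, ?_⟩
  have hB : SpecialLinearGroup.toGL B
      = GeneralLinearGroup.scalar (Fin 3) (Units.mk0 t⁻¹ (inv_ne_zero ht0)) * A := by
    ext : 1
    show t⁻¹ • A.val = _
    simp [Matrix.smul_eq_diagonal_mul]
  rw [slToPGL3C, MonoidHom.comp_apply, MonoidHom.comp_apply, hB, map_mul,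
    GeneralLinearGroup.map_scalar, map_mul, proj_scalar, one_mul]
  rfl

theorem not_injective_of_range_le_PGL3R (ψ : Multiplicative (ZMod 3 × ZMod 3) →* PGL3C)
    (hψ : ψ.range ≤ PGL3R) : ¬Function.Injective ψ := by
  intro hinj
  let lift := (MonoidHom.ofInjective slToPGL3C_injective).symm.toMonoidHom.comp
    (ψ.codRestrict _ fun g => PGL3R_le_range_slToPGL3C (hψ ⟨g, rfl⟩))
  have hlift : Function.Injective (SpecialLinearGroup.toGL.comp lift) := by
    intro g h hgh
    apply hinj
    simpa [lift, Subtype.ext_iff] using SpecialLinearGroup.toGL_injective hgh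
  have h := card_dvd_three_of_pow_three_of_injective (by decide) _ hlift
  simp [Nat.card_eq_fintype_card] at h

theorem not_exists_conj_le_PGL3R {G H : Subgroup PGL3C} (hHG : H ≤ G)
    (e : H ≃* Multiplicative (ZMod 3 × ZMod 3)) :
    ¬∃ φ : PGL3C, G.map (MulAut.conj φ).toMonoidHom ≤ PGL3R := by
  rintro ⟨φ, hφ⟩
  let ψ : Multiplicative (ZMod 3 × ZMod 3) →* PGL3C :=
    (MulAut.conj φ : PGL3C ≃* PGL3C).toMonoidHom.comp (H.subtype.comp e.symm.toMonoidHom)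
  refine not_injective_of_range_le_PGL3R ψ ?_ fun m n hmn => ?_
  · rintro _ ⟨m, rfl⟩
    exact hφ ⟨_, hHG (e.symm m).prop, rfl⟩
  · simpa [ψ, Subtype.ext_iff] using hmn

def MonoidHom.zmodProdOfCommute {M : Type*} [Monoid M] {n : ℕ} [NeZero n] {x y : M}
    (hxy : Commute x y) (hx : x ^ n = 1) (hy : y ^ n = 1) :
    Multiplicative (ZMod n × ZMod n) →* M where
  toFun p := x ^ p.toAdd.1.val * y ^ p.toAdd.2.val
  map_one' := by simp
  map_mul' p q := by
    simp only [toAdd_mul, Prod.fst_add, Prod.snd_add, ZMod.val_add, ← pow_eq_pow_mod _ hx,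
      ← pow_eq_pow_mod _ hy, pow_add, mul_assoc]
    rw [(hxy.pow_pow _ _).left_comm]

namespace Hessian

theorem T_pow_three {R : Type*} [CommRing R] :
    (!![0, 1, 0; 0, 0, 1; 1, 0, 0] : Matrix (Fin 3) (Fin 3) R) ^ 3 = 1 := by
  ext i j
  fin_cases i <;> fin_cases j <;> simp [pow_succ, Matrix.mul_apply, Fin.sum_univ_three]

variable {K : Type*} [Field K] {ζ : K}

theorem S_pow_three (hζ : ζ ^ 3 = 1) : diagonal ![1, ζ, ζ⁻¹] ^ 3 = 1 := by
  rw [diagonal_pow, ← diagonal_one]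
  congr 1
  ext i
  fin_cases i <;> simp [inv_pow, hζ]

theorem T_mul_S (hζ : ζ ^ 3 = 1) :
    (!![0, 1, 0; 0, 0, 1; 1, 0, 0] : Matrix (Fin 3) (Fin 3) K) * diagonal ![1, ζ, ζ⁻¹]
      = ζ • (diagonal ![1, ζ, ζ⁻¹] * !![0, 1, 0; 0, 0, 1; 1, 0, 0]) := by
  have hinv : ζ⁻¹ = ζ ^ 2 := inv_eq_of_mul_eq_one_right (by rw [← pow_succ']; exact hζ)
  ext i j
  fin_cases i <;> fin_cases j <;>
    simp [Matrix.mul_apply, Fin.sum_univ_three, hinv, ← sq, ← pow_succ', hζ]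

theorem eq_zero_of_S_pow_mul_T_pow_mem_range_scalar (hζ : IsPrimitiveRoot ζ 3) {i j : Fin 3}
    (h : diagonal ![1, ζ, ζ⁻¹] ^ (i : ℕ) *
      (!![0, 1, 0; 0, 0, 1; 1, 0, 0] : Matrix (Fin 3) (Fin 3) K) ^ (j : ℕ) ∈
        Set.range (scalar (Fin 3))) :
    i = 0 ∧ j = 0 := by
  obtain ⟨c, hc⟩ := h
  have hζ1 : ζ ≠ 1 := hζ.ne_one (by norm_num)
  have hζ2 : ζ * ζ ≠ 1 := by
    rw [← sq]
    exact hζ.pow_ne_one_of_pos_of_lt (by norm_num) (by norm_num)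
  have h00 := congr_fun₂ hc 0 0
  have h11 := congr_fun₂ hc 1 1
  have h01 := congr_fun₂ hc 0 1
  have h02 := congr_fun₂ hc 0 2
  fin_cases i <;> fin_cases j <;>
    simp [pow_succ, Matrix.mul_apply, Fin.sum_univ_three] at h00 h11 h01 h02 ⊢ <;> simp_all

end Hessian

local notation "ζ₃" => Complex.exp (2 * Real.pi * Complex.I / 3)

theorem isPrimitiveRoot_exp_two_pi_I_div_three : IsPrimitiveRoot ζ₃ 3 := by
  simpa using Complex.isPrimitiveRoot_exp 3 (by norm_num)

theorem exists_injective_range_le_closure_hessian {S T : GL (Fin 3) ℂ}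
    (hS : (S : Matrix (Fin 3) (Fin 3) ℂ) = diagonal ![1, ζ₃, ζ₃⁻¹])
    (hT : (T : Matrix (Fin 3) (Fin 3) ℂ) = !![0, 1, 0; 0, 0, 1; 1, 0, 0]) :
    ∃ ψ : Multiplicative (ZMod 3 × ZMod 3) →* PGL3C,
      Function.Injective ψ ∧ ψ.range ≤ Subgroup.closure {proj S, proj T} := by
  have hζ := isPrimitiveRoot_exp_two_pi_I_div_three
  have hS3 : proj S ^ 3 = 1 := by
    rw [← map_pow, show S ^ 3 = 1 from Units.ext (by simp [hS, Hessian.S_pow_three hζ.pow_eq_one]),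
      map_one]
  have hT3 : proj T ^ 3 = 1 := by
    rw [← map_pow, show T ^ 3 = 1 from Units.ext (by simp [hT, Hessian.T_pow_three]), map_one]
  have hST : Commute (proj S) (proj T) := by
    have hTS : T * S = GeneralLinearGroup.scalar (Fin 3) (Units.mk0 ζ₃ (hζ.ne_zero (by norm_num)))
        * (S * T) := Units.ext <| by
      simp [hS, hT, Hessian.T_mul_S hζ.pow_eq_one, Matrix.smul_eq_diagonal_mul]
    rw [Commute, SemiconjBy, ← map_mul, ← map_mul, hTS,
      map_mul proj (GeneralLinearGroup.scalar _ _), proj_scalar, one_mul]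
  refine ⟨MonoidHom.zmodProdOfCommute hST hS3 hT3,
    (injective_iff_map_eq_one _).mpr fun p hp => ?_, ?_⟩
  · have hproj : proj (S ^ p.toAdd.1.val * T ^ p.toAdd.2.val) = 1 := by
      rwa [map_mul, map_pow, map_pow]
    have hscalar := GeneralLinearGroup.mem_center_iff_val_mem_range_scalar.mp
      ((QuotientGroup.eq_one_iff _).mp hproj)
    rw [Units.val_mul, Units.val_pow_eq_pow_val, Units.val_pow_eq_pow_val, hS, hT] at hscalar
    obtain ⟨hi, hj⟩ := Hessian.eq_zero_of_S_pow_mul_T_pow_mem_range_scalar hζ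
      (i := p.toAdd.1) (j := p.toAdd.2) hscalar
    exact Prod.ext hi hj
  · rintro _ ⟨p, rfl⟩
    exact mul_mem (pow_mem (Subgroup.subset_closure (by simp)) _)
      (pow_mem (Subgroup.subset_closure (by simp)) _)

theorem stmt16 :
    (∀ G : Subgroup PGL3C,
        (∃ H : Subgroup PGL3C, H ≤ G ∧
            Nonempty (H ≃* Multiplicative (ZMod 3 × ZMod 3))) →
        ¬∃ φ : PGL3C, Subgroup.map (MulAut.conj φ).toMonoidHom G ≤ PGL3R) ∧
      ∀ S T : GL (Fin 3) ℂ,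
        (S : Matrix (Fin 3) (Fin 3) ℂ)
          = Matrix.diagonal ![1, Complex.exp (2 * Real.pi * Complex.I / 3), (Complex.exp (2 * Real.pi * Complex.I / 3))⁻¹] →
        (T : Matrix (Fin 3) (Fin 3) ℂ) = !![0, 1, 0; 0, 0, 1; 1, 0, 0] →
        ∀ G : Subgroup PGL3C, Subgroup.closure {proj S, proj T} ≤ G →
          ¬∃ φ : PGL3C, Subgroup.map (MulAut.conj φ).toMonoidHom G ≤ PGL3R := by
  refine ⟨fun G ⟨H, hHG, ⟨e⟩⟩ => not_exists_conj_le_PGL3R hHG e, fun S T hS hT G hG => ?_⟩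
  obtain ⟨ψ, hψ, hle⟩ := exists_injective_range_le_closure_hessian hS hT
  exact not_exists_conj_le_PGL3R (hle.trans hG) (MonoidHom.ofInjective hψ).symm
end
end
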